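/- arXiv:2411.12998 — 4 statements merged into one kernel-verified Lean document; each statement's English description precedes it below -/
import Mathlib

section
/- For a positive integer n, there exists a partition of {1,…,2n} into n pairs {(aᵢ,bᵢ) : i = 1,…,n} with aᵢ < bᵢ and bᵢ − aᵢ = i for each i, if and only if n ≡ 0 or 1 (mod 4). -/
/-!
Necessity is a counting argument: the pairs partition `[1, 2n]`, so
`n (2n + 1) = ∑ (aᵢ + bᵢ) = 2 ∑ aᵢ + n (n + 1) / 2`, i.e. `4 ∑ aᵢ = n (3n + 1)`,
which forces `n ≡ 0, 1 (mod 4)`.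

Sufficiency is Skolem's explicit construction. For `n = 4m` (resp. `4m + 1`) the pairs with
even difference are nested around the point `2m + 1` and fill `[1, 4m + 1]` except that point;
the pairs with odd difference fill the rest, nested around two centres in the right half, with
a few exceptional pairs patching the gaps. The cases `n = 1, 5` are too small for the pattern.
-/

open Finset

def IsSkolem (n : ℕ) (a b : ℕ → ℕ) : Prop :=
  (∀ i ∈ Icc 1 n, a i < b i ∧ b i - a i = i) ∧
    (Icc 1 n).biUnion (fun i => {a i, b i}) = Icc 1 (2 * n) ∧
    ∀ i ∈ Icc 1 n, ∀ j ∈ Icc 1 n, i ≠ j → Disjoint ({a i, b i} : Finset ℕ) {a j, b j}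

lemma two_mul_sum_Icc_one_id (k : ℕ) : 2 * ∑ i ∈ Icc 1 k, i = k * (k + 1) := by
  induction k with
  | zero => simp
  | succ k ih =>
    rw [sum_Icc_succ_top (by omega), mul_add, ih]
    ring

namespace IsSkolem

variable {n : ℕ} {a b : ℕ → ℕ}

lemma sum_Icc_eq (h : IsSkolem n a b) :
    ∑ x ∈ Icc 1 (2 * n), x = ∑ i ∈ Icc 1 n, (2 * a i + i) := by
  obtain ⟨hdiff, hunion, hdisj⟩ := h
  rw [← hunion, sum_biUnion hdisj]
  refine sum_congr rfl fun i hi => ?_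
  have := hdiff i hi
  rw [sum_pair (by omega)]
  omega

theorem mod_four (h : IsSkolem n a b) : n % 4 = 0 ∨ n % 4 = 1 := by
  have hsum : 4 * ∑ i ∈ Icc 1 n, a i + n * (n + 1) = 2 * n * (2 * n + 1) := by
    rw [← two_mul_sum_Icc_one_id, ← two_mul_sum_Icc_one_id, h.sum_Icc_eq, sum_add_distrib,
      ← mul_sum]
    ring
  have h4 : 4 ∣ n * (3 * n + 1) := ⟨∑ i ∈ Icc 1 n, a i, by nlinarith⟩
  have : n % 4 < 4 := Nat.mod_lt _ (by norm_num)
  rw [Nat.dvd_iff_mod_eq_zero, Nat.mul_mod, Nat.add_mod, Nat.mul_mod 3] at h4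
  interval_cases n % 4 <;> simp_all

theorem of_add (a : ℕ → ℕ) (hbound : ∀ i ∈ Icc 1 n, 1 ≤ a i ∧ a i + i ≤ 2 * n)
    (hne : ∀ i ∈ Icc 1 n, ∀ j ∈ Icc 1 n, i ≠ j →
      a i ≠ a j ∧ a i ≠ a j + j ∧ a i + i ≠ a j ∧ a i + i ≠ a j + j) :
    IsSkolem n a (fun i => a i + i) := by
  have hdisj : ∀ i ∈ Icc 1 n, ∀ j ∈ Icc 1 n, i ≠ j →
      Disjoint ({a i, a i + i} : Finset ℕ) {a j, a j + j} := by
    intro i hi j hj hij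
    have := hne i hi j hj hij
    simp only [disjoint_insert_left, disjoint_insert_right, disjoint_singleton, mem_insert,
      mem_singleton]
    omega
  have hpair : ∀ i ∈ Icc 1 n, ({a i, a i + i} : Finset ℕ).card = 2 := fun i hi =>
    card_pair (by rw [mem_Icc] at hi; omega)
  refine ⟨fun i hi => ?_, ?_, hdisj⟩
  · rw [mem_Icc] at hi
    dsimp only
    omega
  apply eq_of_subset_of_card_le
  · intro x hx
    simp only [mem_biUnion, mem_insert, mem_singleton] at hx
    obtain ⟨i, hi, hx⟩ := hx
    have := hbound i hi
    rw [mem_Icc] at hi ⊢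
    omega
  · rw [card_biUnion hdisj, sum_congr rfl hpair, sum_const, Nat.card_Icc, Nat.card_Icc,
      smul_eq_mul]
    omega

end IsSkolem

/-- First elements of Skolem's sequence of order `4m`; `d` is the difference. -/
def skolemFourMul (m d : ℕ) : ℕ :=
  if d % 2 = 0 then 2 * m + 1 - d / 2
  else if d = 4 * m - 1 then 2 * m + 1
  else if d = 2 * m + 1 then 6 * m - 1
  else if d = 1 then 7 * m
  else if 2 * m + 1 < d then (12 * m + 1 - d) / 2
  else (12 * m - 1 - d) / 2

/-- First elements of Skolem's sequence of order `4m + 1`, for `m ≥ 2`. -/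
def skolemFourMulAddOne (m d : ℕ) : ℕ :=
  if d % 2 = 0 then 2 * m + 1 - d / 2
  else if d = 4 * m + 1 then 2 * m + 1
  else if d = 2 * m - 1 then 6 * m + 3
  else if d = 1 then 5 * m + 2
  else if 2 * m - 1 < d then (12 * m + 3 - d) / 2
  else (12 * m + 5 - d) / 2

lemma isSkolem_fourMul (m : ℕ) :
    IsSkolem (4 * m) (skolemFourMul m) (fun i => skolemFourMul m i + i) := by
  refine IsSkolem.of_add _ (fun i hi => ?_) (fun i hi j hj hij => ?_) <;>
    simp only [mem_Icc] at * <;> unfold skolemFourMul <;> split_ifs <;> omega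

lemma isSkolem_fourMulAddOne {m : ℕ} (hm : 2 ≤ m) :
    IsSkolem (4 * m + 1) (skolemFourMulAddOne m) (fun i => skolemFourMulAddOne m i + i) := by
  refine IsSkolem.of_add _ (fun i hi => ?_) (fun i hi j hj hij => ?_) <;>
    simp only [mem_Icc] at * <;> unfold skolemFourMulAddOne <;> split_ifs <;> omega

lemma exists_isSkolem_one : ∃ a b, IsSkolem 1 a b :=
  ⟨_, _, IsSkolem.of_add (fun _ => 1) (by simp) (by simp)⟩

lemma exists_isSkolem_five : ∃ a b, IsSkolem 5 a b :=
  ⟨_, _, IsSkolem.of_add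
    (fun d => if d = 1 then 9 else if d = 2 then 2 else if d = 3 then 5 else if d = 4 then 3 else 1)
    (by decide) (by decide)⟩

theorem stmt_4_general (n : ℕ) :
    (∃ a b : ℕ → ℕ, (∀ i ∈ Finset.Icc 1 n, a i < b i ∧ b i - a i = i) ∧
      (Finset.Icc 1 n).biUnion (fun i => {a i, b i}) = Finset.Icc 1 (2 * n) ∧
      (∀ i ∈ Finset.Icc 1 n, ∀ j ∈ Finset.Icc 1 n, i ≠ j →
        Disjoint ({a i, b i} : Finset ℕ) {a j, b j}))
    ↔ (n % 4 = 0 ∨ n % 4 = 1) := by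
  change (∃ a b, IsSkolem n a b) ↔ _
  refine ⟨fun ⟨a, b, h⟩ => h.mod_four, fun hmod => ?_⟩
  obtain ⟨m, rfl | rfl⟩ : ∃ m, n = 4 * m ∨ n = 4 * m + 1 := ⟨n / 4, by omega⟩
  · exact ⟨_, _, isSkolem_fourMul m⟩
  · obtain rfl | rfl | hm : m = 0 ∨ m = 1 ∨ 2 ≤ m := by omega
    · exact exists_isSkolem_one
    · exact exists_isSkolem_five
    · exact ⟨_, _, isSkolem_fourMulAddOne hm⟩

theorem stmt_4 (n : ℕ) (hn : 1 ≤ n) :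
    (∃ a b : ℕ → ℕ, (∀ i ∈ Finset.Icc 1 n, a i < b i ∧ b i - a i = i) ∧
      (Finset.Icc 1 n).biUnion (fun i => {a i, b i}) = Finset.Icc 1 (2 * n) ∧
      (∀ i ∈ Finset.Icc 1 n, ∀ j ∈ Finset.Icc 1 n, i ≠ j →
        Disjoint ({a i, b i} : Finset ℕ) {a j, b j}))
    ↔ (n % 4 = 0 ∨ n % 4 = 1) :=
  stmt_4_general n
end

section
/- For a positive integer n, there exists a partition of {1,…,2n−1} ∪ {2n+1} into n pairs {(aᵢ,bᵢ) : i = 1,…,n} with aᵢ < bᵢ and bᵢ − aᵢ = i for each i, if and only if n ≡ 2 or 3 (mod 4). -/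
/-!
Write `b i = a i + i`. Summing all positions of a hooked Skolem sequence of order `n` gives
`2 ∑ aᵢ + n(n+1)/2 = (n+1)(2n+1) - 2n`, i.e. `4 ∑ aᵢ = 3n² + n + 2`, and the right-hand side is
divisible by 4 only when `n ≡ 2, 3 (mod 4)`. Conversely, for `n = 4m+2` and for `n = 4m+3` with
`m ≥ 1` there are explicit constructions: the pairs of each family are nested around a common
centre, so their starts and ends fill two complementary intervals; `n = 3` is checked directly.
-/

open Finset

def hookedSkolemTarget (n : ℕ) : Finset ℕ := Icc 1 (2 * n - 1) ∪ {2 * n + 1}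

def IsHookedSkolem (n : ℕ) (a b : ℕ → ℕ) : Prop :=
  (∀ i ∈ Icc 1 n, a i < b i ∧ b i - a i = i) ∧
    (Icc 1 n).biUnion (fun i => {a i, b i}) = hookedSkolemTarget n ∧
    (∀ i ∈ Icc 1 n, ∀ j ∈ Icc 1 n, i ≠ j → Disjoint ({a i, b i} : Finset ℕ) {a j, b j})

/-- The formula also covers `n = 0`, where `2 * n - 1` truncates to `0`. -/
lemma hookedSkolemTarget_eq_erase (n : ℕ) :
    hookedSkolemTarget n = (Icc 1 (2 * n + 1)).erase (2 * n) := by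
  ext x
  simp only [hookedSkolemTarget, mem_union, mem_Icc, mem_singleton, mem_erase]
  omega

lemma Finset.sum_Icc_id_mul_two (N : ℕ) : (∑ i ∈ Icc 1 N, i) * 2 = N * (N + 1) := by
  induction N with
  | zero => rfl
  | succ k ih => rw [sum_Icc_succ_top (by omega), add_mul, ih]; ring

lemma sum_hookedSkolemTarget_mul_two (n : ℕ) :
    (∑ x ∈ hookedSkolemTarget n, x) * 2 + 4 * n = 2 * (n + 1) * (2 * n + 1) := by
  have herase := sum_erase_add (Icc 1 (2 * n + 1)) id (a := 2 * n)
  have hgauss := sum_Icc_id_mul_two (2 * n + 1)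
  rcases Nat.eq_zero_or_pos n with rfl | hn
  · rfl
  · rw [hookedSkolemTarget_eq_erase]
    simp only [id, mem_Icc] at herase
    specialize herase (by omega)
    nlinarith

lemma card_hookedSkolemTarget {n : ℕ} (hn : 1 ≤ n) : (hookedSkolemTarget n).card = 2 * n := by
  rw [hookedSkolemTarget_eq_erase, card_erase_of_mem (by simp only [mem_Icc]; omega), Nat.card_Icc]
  omega

lemma IsHookedSkolem.four_mul_sum_eq {n : ℕ} {a b : ℕ → ℕ} (h : IsHookedSkolem n a b) :
    4 * ∑ i ∈ Icc 1 n, a i = 3 * n ^ 2 + n + 2 := by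
  obtain ⟨hdiff, hcover, hdisj⟩ := h
  have hb : ∀ i ∈ Icc 1 n, b i = a i + i := fun i hi => by have := hdiff i hi; omega
  have hsum : ∑ x ∈ hookedSkolemTarget n, x = 2 * ∑ i ∈ Icc 1 n, a i + ∑ i ∈ Icc 1 n, i
  · rw [← hcover, sum_biUnion (fun i hi j hj => hdisj i hi j hj), mul_sum, ← sum_add_distrib]
    refine sum_congr rfl fun i hi => ?_
    rw [sum_pair (hdiff i hi).1.ne, hb i hi]
    ring
  have htarget := sum_hookedSkolemTarget_mul_two n
  have hgauss := sum_Icc_id_mul_two n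
  rw [hsum] at htarget
  nlinarith

lemma Nat.mod_four_eq_two_or_three_of_four_dvd {n : ℕ} (h : 4 ∣ 3 * n ^ 2 + n + 2) :
    n % 4 = 2 ∨ n % 4 = 3 := by
  have : n % 4 < 4 := Nat.mod_lt _ (by norm_num)
  rw [Nat.dvd_iff_mod_eq_zero, Nat.add_mod, Nat.add_mod (3 * n ^ 2), Nat.mul_mod, Nat.pow_mod] at h
  interval_cases n % 4 <;> simp_all

lemma IsHookedSkolem.mod_four {n : ℕ} {a b : ℕ → ℕ} (h : IsHookedSkolem n a b) :
    n % 4 = 2 ∨ n % 4 = 3 :=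
  Nat.mod_four_eq_two_or_three_of_four_dvd ⟨_, h.four_mul_sum_eq.symm⟩

lemma IsHookedSkolem.of_start {n : ℕ} (hn : 1 ≤ n) (a : ℕ → ℕ)
    (hbound : ∀ i ∈ Icc 1 n, 1 ≤ a i ∧ a i + i ≤ 2 * n + 1 ∧ a i ≠ 2 * n ∧ a i + i ≠ 2 * n)
    (hinj : ∀ i ∈ Icc 1 n, ∀ j ∈ Icc 1 n, i ≠ j →
      a i ≠ a j ∧ a i ≠ a j + j ∧ a i + i ≠ a j ∧ a i + i ≠ a j + j) :
    IsHookedSkolem n a (fun i => a i + i) := by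
  have hdisj : ∀ i ∈ Icc 1 n, ∀ j ∈ Icc 1 n, i ≠ j →
      Disjoint ({a i, a i + i} : Finset ℕ) {a j, a j + j} := by
    intro i hi j hj hij
    have := hinj i hi j hj hij
    simp only [disjoint_insert_left, disjoint_insert_right, mem_insert, mem_singleton,
      disjoint_singleton]
    omega
  refine ⟨fun i hi => ⟨Nat.lt_add_of_pos_right (mem_Icc.mp hi).1, Nat.add_sub_cancel_left _ _⟩, ?_,
    hdisj⟩
  -- the `n` pairs are disjoint, so their union has `2n` elements, as many as the target
  refine eq_of_subset_of_card_le (fun x hx => ?_) ?_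
  · obtain ⟨i, hi, hx⟩ := mem_biUnion.mp hx
    have := hbound i hi
    simp only [mem_Icc] at hi
    simp only [mem_insert, mem_singleton] at hx
    simp only [hookedSkolemTarget, mem_union, mem_Icc, mem_singleton]
    omega
  · rw [card_hookedSkolemTarget hn, card_biUnion hdisj,
      sum_congr rfl fun i hi => card_pair (by simp only [mem_Icc] at hi; omega)]
    simp [mul_comm]

namespace HookedSkolem

/-- Order `4m+2`: the pairs are `(m+1, m+2)` for `i = 1`, `(2m+3, 6m+4)` for `i = 4m+1`,
`(4m+4+r, 8m+3-r)` for the other odd `i = 4m-1-2r`, the hook `(6m+3, 8m+5)` for `i = 2m+2`, and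
`(2m+2-k, 2m+2+k)`, resp. `(2m+3-k, 2m+3+k)`, for the other even `i = 2k` above, resp. below,
`2m+2`. -/
def startTwoModFour (m i : ℕ) : ℕ :=
  if i % 2 = 1 then
    if i = 1 then m + 1
    else if i = 4 * m + 1 then 2 * m + 3
    else 4 * m + 4 + (4 * m - 1 - i) / 2
  else
    if i = 2 * m + 2 then 6 * m + 3
    else if 2 * m + 4 ≤ i then 2 * m + 2 - i / 2
    else m + 3 + (2 * m - i) / 2

/-- Order `4m+3`, `m ≥ 1`: the pairs are `(2m+2-k, 2m+2+k)` for even `i = 2k`, `(2m+2, 6m+5)`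
for `i = 4m+3`, `(4m+4+r, 8m+5-r)` for odd `i = 4m+1-2r` in `[2m+3, 4m+1]`, the hook
`(6m+6, 8m+7)` for `i = 2m+1`, `(5m+4, 5m+5)` for `i = 1`, and `(5m+6+r, 7m+5-r)` for odd
`i = 2m-1-2r` in `[3, 2m-1]`. -/
def startThreeModFour (m i : ℕ) : ℕ :=
  if i % 2 = 0 then 2 * m + 2 - i / 2
  else if i = 4 * m + 3 then 2 * m + 2
  else if 2 * m + 3 ≤ i then 4 * m + 4 + (4 * m + 1 - i) / 2
  else if i = 2 * m + 1 then 6 * m + 6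
  else if i = 1 then 5 * m + 4
  else 5 * m + 6 + (2 * m - 1 - i) / 2

def startOrderThree (i : ℕ) : ℕ := if i = 1 then 2 else if i = 2 then 5 else 1

lemma startTwoModFour_cases (m i : ℕ) :
    (i = 1 ∧ startTwoModFour m i = m + 1) ∨
    (i % 2 = 1 ∧ i = 4 * m + 1 ∧ 2 ≤ i ∧ startTwoModFour m i = 2 * m + 3) ∨
    (i % 2 = 1 ∧ 3 ≤ i ∧ i ≠ 4 * m + 1 ∧ startTwoModFour m i = 4 * m + 4 + (4 * m - 1 - i) / 2) ∨
    (i % 2 = 0 ∧ i = 2 * m + 2 ∧ startTwoModFour m i = 6 * m + 3) ∨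
    (i % 2 = 0 ∧ 2 * m + 4 ≤ i ∧ startTwoModFour m i = 2 * m + 2 - i / 2) ∨
    (i % 2 = 0 ∧ i < 2 * m + 2 ∧ startTwoModFour m i = m + 3 + (2 * m - i) / 2) := by
  unfold startTwoModFour
  split_ifs with h1 h2 h3 h4 h5
  · exact .inl ⟨h2, rfl⟩
  · exact .inr <| .inl ⟨h1, h3, by omega, rfl⟩
  · exact .inr <| .inr <| .inl ⟨h1, by omega, h3, rfl⟩
  · exact .inr <| .inr <| .inr <| .inl ⟨by omega, h4, rfl⟩
  · exact .inr <| .inr <| .inr <| .inr <| .inl ⟨by omega, h5, rfl⟩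
  · exact .inr <| .inr <| .inr <| .inr <| .inr ⟨by omega, by omega, rfl⟩

lemma startThreeModFour_cases (m i : ℕ) :
    (i % 2 = 0 ∧ startThreeModFour m i = 2 * m + 2 - i / 2) ∨
    (i % 2 = 1 ∧ i = 4 * m + 3 ∧ startThreeModFour m i = 2 * m + 2) ∨
    (i % 2 = 1 ∧ 2 * m + 3 ≤ i ∧ i ≠ 4 * m + 3 ∧
      startThreeModFour m i = 4 * m + 4 + (4 * m + 1 - i) / 2) ∨
    (i % 2 = 1 ∧ i = 2 * m + 1 ∧ startThreeModFour m i = 6 * m + 6) ∨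
    (i = 1 ∧ i ≠ 2 * m + 1 ∧ startThreeModFour m i = 5 * m + 4) ∨
    (i % 2 = 1 ∧ 3 ≤ i ∧ i < 2 * m + 1 ∧
      startThreeModFour m i = 5 * m + 6 + (2 * m - 1 - i) / 2) := by
  unfold startThreeModFour
  split_ifs with h1 h2 h3 h4 h5
  · exact .inl ⟨h1, rfl⟩
  · exact .inr <| .inl ⟨by omega, h2, rfl⟩
  · exact .inr <| .inr <| .inl ⟨by omega, h3, h2, rfl⟩
  · exact .inr <| .inr <| .inr <| .inl ⟨by omega, h4, rfl⟩
  · exact .inr <| .inr <| .inr <| .inr <| .inl ⟨h5, h4, rfl⟩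
  · exact .inr <| .inr <| .inr <| .inr <| .inr ⟨by omega, by omega, by omega, rfl⟩

lemma isHookedSkolem_startTwoModFour (m : ℕ) :
    IsHookedSkolem (4 * m + 2) (startTwoModFour m) (fun i => startTwoModFour m i + i) := by
  refine IsHookedSkolem.of_start (by omega) _ (fun i hi => ?_) (fun i hi j hj hij => ?_)
  · simp only [mem_Icc] at hi
    have := startTwoModFour_cases m i
    omega
  · simp only [mem_Icc] at hi hj
    have := startTwoModFour_cases m i
    have := startTwoModFour_cases m j
    omega

lemma isHookedSkolem_startThreeModFour {m : ℕ} (hm : 1 ≤ m) :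
    IsHookedSkolem (4 * m + 3) (startThreeModFour m) (fun i => startThreeModFour m i + i) := by
  refine IsHookedSkolem.of_start (by omega) _ (fun i hi => ?_) (fun i hi j hj hij => ?_)
  · simp only [mem_Icc] at hi
    have := startThreeModFour_cases m i
    omega
  · simp only [mem_Icc] at hi hj
    have := startThreeModFour_cases m i
    have := startThreeModFour_cases m j
    omega

lemma isHookedSkolem_startOrderThree :
    IsHookedSkolem 3 startOrderThree (fun i => startOrderThree i + i) :=
  IsHookedSkolem.of_start (by norm_num) _ (by decide) (by decide)

end HookedSkolem

lemma exists_isHookedSkolem_of_mod_four {n : ℕ} (h : n % 4 = 2 ∨ n % 4 = 3) :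
    ∃ a b, IsHookedSkolem n a b := by
  obtain ⟨m, rfl | rfl⟩ : ∃ m, n = 4 * m + 2 ∨ n = 4 * m + 3 := ⟨n / 4, by omega⟩
  · exact ⟨_, _, HookedSkolem.isHookedSkolem_startTwoModFour m⟩
  · rcases Nat.eq_zero_or_pos m with rfl | hm
    · exact ⟨_, _, HookedSkolem.isHookedSkolem_startOrderThree⟩
    · exact ⟨_, _, HookedSkolem.isHookedSkolem_startThreeModFour hm⟩

theorem stmt_5_general (n : ℕ) :
    (∃ a b : ℕ → ℕ, (∀ i ∈ Finset.Icc 1 n, a i < b i ∧ b i - a i = i) ∧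
      (Finset.Icc 1 n).biUnion (fun i => {a i, b i}) =
        Finset.Icc 1 (2 * n - 1) ∪ {2 * n + 1} ∧
      (∀ i ∈ Finset.Icc 1 n, ∀ j ∈ Finset.Icc 1 n, i ≠ j →
        Disjoint ({a i, b i} : Finset ℕ) {a j, b j}))
    ↔ (n % 4 = 2 ∨ n % 4 = 3) :=
  ⟨fun ⟨_, _, h⟩ => IsHookedSkolem.mod_four h, exists_isHookedSkolem_of_mod_four⟩

theorem stmt_5 (n : ℕ) (hn : 1 ≤ n) :
    (∃ a b : ℕ → ℕ, (∀ i ∈ Finset.Icc 1 n, a i < b i ∧ b i - a i = i) ∧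
      (Finset.Icc 1 n).biUnion (fun i => {a i, b i}) =
        Finset.Icc 1 (2 * n - 1) ∪ {2 * n + 1} ∧
      (∀ i ∈ Finset.Icc 1 n, ∀ j ∈ Finset.Icc 1 n, i ≠ j →
        Disjoint ({a i, b i} : Finset ℕ) {a j, b j}))
    ↔ (n % 4 = 2 ∨ n % 4 = 3) :=
  stmt_5_general n
end

section
/- Let k ≥ 0, n ≥ 3, t ∈ {0,1}, and suppose 3n ≡ t or 3−t (mod 4). Then there exist a partition of the set L = {1,…,r} ∪ {r+1+k, …, 3n+k−1} ∪ {3n+k+t} (for some positive integer r) into n triples D₁,…,Dₙ, a signing ε : L → {−1,1} such that for each i the signed sum Σ_{x∈Dᵢ} ε(x)·x = 0, and a choice of elements dᵢ ∈ Dᵢ together with signs δᵢ ∈ {−1,1} such that Σ_{i=1}^{n} δᵢ·ε(dᵢ)·dᵢ = 0. -/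
/-!
Take a Skolem sequence (`t = 0`, `n ≡ 0, 1 mod 4`) or a hooked Skolem sequence
(`t = 1`, `n ≡ 2, 3 mod 4`) of order `n`, and let `a d < a d + d` be the two positions of `d`.
Shifting positions by `n + k`, the triples `{d, a d + n + k, a d + d + n + k}` have signed sum
`d + (a d + n + k) - (a d + d + n + k) = 0` and partition
`[1, n] ∪ [n + k + 1, 3n + k - 1] ∪ {3n + k + t}`, so `r = n`.

As distinguished elements take the `d` themselves and sign `[1, n]` by blocks
`(m + 1) - (m + 2) - (m + 3) + (m + 4) = 0`. When `n ≡ 1, 2 mod 4` the sum `1 + ⋯ + n` is odd;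
then triples `2` and `4` contribute their middle elements instead, which differ by
`a 2 - a 4 = ±1`, and the remaining small indices are signed by hand.
-/

open Finset

/-- The pairs `{a d, a d + d}`, `1 ≤ d ≤ n`, are pairwise disjoint subsets of
`[1, 2n - 1] ∪ {2n + t}` (hence, by counting, partition it): a Skolem sequence of order `n` for
`t = 0`, a hooked one for `t = 1`. -/
structure IsSkolemPairing (n t : ℕ) (a : ℕ → ℕ) : Prop where
  one_le : ∀ d ∈ Icc 1 n, 1 ≤ a d
  lt : ∀ d ∈ Icc 1 n, a d < 2 * n
  add_lt_or_eq : ∀ d ∈ Icc 1 n, a d + d < 2 * n ∨ a d + d = 2 * n + t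
  ne : ∀ d ∈ Icc 1 n, ∀ e ∈ Icc 1 n, d ≠ e → a d ≠ a e ∧ a d ≠ a e + e ∧ a d + d ≠ a e + e

def hookedSkolem3 : ℕ → ℕ
  | 1 => 1
  | 2 => 3
  | _ => 4

def skolem4 : ℕ → ℕ
  | 1 => 7
  | 2 => 2
  | 3 => 3
  | _ => 1

def skolem5 : ℕ → ℕ
  | 1 => 8
  | 2 => 1
  | 3 => 4
  | 4 => 2
  | _ => 5

theorem isSkolemPairing_hookedSkolem3 : IsSkolemPairing 3 1 hookedSkolem3 :=
  ⟨by decide, by decide, by decide, by decide⟩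

theorem isSkolemPairing_skolem4 : IsSkolemPairing 4 0 skolem4 :=
  ⟨by decide, by decide, by decide, by decide⟩

theorem isSkolemPairing_skolem5 : IsSkolemPairing 5 0 skolem5 :=
  ⟨by decide, by decide, by decide, by decide⟩

def skolemMod0 (m d : ℕ) : ℕ :=
  if d % 2 = 0 then 6*m - d/2
  else if d = 1 then m
  else if d = 2*m - 1 then 2*m
  else if d < 2*m then (4*m + 1 - d)/2
  else if d = 4*m - 1 then 2*m + 1
  else (4*m - 1 - d)/2

def skolemMod1 (m d : ℕ) : ℕ :=
  if d % 2 = 0 then 6*m + 2 - d/2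
  else if d = 1 then m + 1
  else if d = 2*m - 1 then 2*m + 2
  else if d < 2*m then (4*m + 3 - d)/2
  else if d = 4*m + 1 then 2*m + 1
  else (4*m + 1 - d)/2

def hookedSkolemMod2 (m d : ℕ) : ℕ :=
  if d = 4*m + 2 then 4*m + 3
  else if d % 2 = 0 then 2*m + 1 - d/2
  else if d = 4*m + 1 then 2*m + 1
  else if d = 2*m + 1 then 4*m + 2
  else if d = 1 then 7*m + 3
  else if d < 2*m + 1 then (12*m + 5 - d)/2
  else (12*m + 7 - d)/2

def hookedSkolemMod3 (m d : ℕ) : ℕ :=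
  if d = 4*m + 3 then 4*m + 4
  else if d % 2 = 0 then 2*m + 2 - d/2
  else if d = 4*m + 1 then 2*m + 2
  else if d = 2*m + 1 then 6*m + 4
  else if d = 1 then 7*m + 4
  else if d < 2*m + 1 then (12*m + 7 - d)/2
  else (12*m + 9 - d)/2

theorem isSkolemPairing_skolemMod0 {m : ℕ} (hm : 2 ≤ m) :
    IsSkolemPairing (4 * m) 0 (skolemMod0 m) := by
  constructor <;> intros <;> simp only [mem_Icc] at * <;> unfold skolemMod0 <;> split_ifs <;> omega

theorem isSkolemPairing_skolemMod1 {m : ℕ} (hm : 2 ≤ m) :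
    IsSkolemPairing (4 * m + 1) 0 (skolemMod1 m) := by
  constructor <;> intros <;> simp only [mem_Icc] at * <;> unfold skolemMod1 <;> split_ifs <;> omega

theorem isSkolemPairing_hookedSkolemMod2 {m : ℕ} (hm : 1 ≤ m) :
    IsSkolemPairing (4 * m + 2) 1 (hookedSkolemMod2 m) := by
  constructor <;> intros <;> simp only [mem_Icc] at * <;> unfold hookedSkolemMod2 <;> split_ifs <;>
    omega

theorem isSkolemPairing_hookedSkolemMod3 {m : ℕ} (hm : 1 ≤ m) :
    IsSkolemPairing (4 * m + 3) 1 (hookedSkolemMod3 m) := by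
  constructor <;> intros <;> simp only [mem_Icc] at * <;> unfold hookedSkolemMod3 <;> split_ifs <;>
    omega

theorem exists_isSkolemPairing {n t : ℕ} (hn : 3 ≤ n)
    (ht : n % 4 ≤ 1 ∧ t = 0 ∨ 2 ≤ n % 4 ∧ t = 1) :
    ∃ a, IsSkolemPairing n t a ∧ (n % 4 = 1 ∨ n % 4 = 2 → a 2 = a 4 + 1 ∨ a 4 = a 2 + 1) := by
  obtain ⟨m, rfl | rfl | rfl | rfl⟩ :
      ∃ m, n = 4 * m ∨ n = 4 * m + 1 ∨ n = 4 * m + 2 ∨ n = 4 * m + 3 := ⟨n / 4, by omega⟩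
  · obtain rfl : t = 0 := by omega
    obtain rfl | hm : m = 1 ∨ 2 ≤ m := by omega
    · exact ⟨skolem4, isSkolemPairing_skolem4, by omega⟩
    · exact ⟨skolemMod0 m, isSkolemPairing_skolemMod0 hm, by omega⟩
  · obtain rfl : t = 0 := by omega
    obtain rfl | hm : m = 1 ∨ 2 ≤ m := by omega
    · exact ⟨skolem5, isSkolemPairing_skolem5, fun _ => by decide⟩
    · refine ⟨skolemMod1 m, isSkolemPairing_skolemMod1 hm, fun _ => Or.inl ?_⟩
      unfold skolemMod1
      split_ifs <;> omega
  · obtain rfl : t = 1 := by omega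
    refine ⟨hookedSkolemMod2 m, isSkolemPairing_hookedSkolemMod2 (by omega), fun _ => Or.inl ?_⟩
    unfold hookedSkolemMod2
    split_ifs <;> omega
  · obtain rfl : t = 1 := by omega
    obtain rfl | hm : m = 0 ∨ 1 ≤ m := by omega
    · exact ⟨hookedSkolem3, isSkolemPairing_hookedSkolem3, by omega⟩
    · exact ⟨hookedSkolemMod3 m, isSkolemPairing_hookedSkolemMod3 hm, by omega⟩

theorem sum_range_add_one_eq_sum_Icc {M : Type*} [AddCommMonoid M] (f : ℕ → M) (n : ℕ) :
    ∑ i ∈ range n, f (i + 1) = ∑ j ∈ Icc 1 n, f j := by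
  rw [← Ico_add_one_right_eq_Icc, sum_Ico_eq_sum_range]
  simp [add_comm]

def skolemTriple (n k : ℕ) (a : ℕ → ℕ) (d : ℕ) : Finset ℕ := {d, a d + n + k, a d + d + n + k}

def tripleSign (n k : ℕ) (a : ℕ → ℕ) (x : ℕ) : ℤ :=
  if x ∈ (Icc 1 n).image (fun d => a d + d + n + k) then -1 else 1

theorem tripleSign_eq_one_or_eq_neg_one (n k : ℕ) (a : ℕ → ℕ) (x : ℕ) :
    tripleSign n k a x = 1 ∨ tripleSign n k a x = -1 := by
  unfold tripleSign
  split_ifs <;> simp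

namespace IsSkolemPairing

variable {n t : ℕ} {a : ℕ → ℕ}

theorem card_skolemTriple (ha : IsSkolemPairing n t a) (k : ℕ) {d : ℕ} (hd : d ∈ Icc 1 n) :
    (skolemTriple n k a d).card = 3 := by
  have := ha.one_le d hd
  rw [mem_Icc] at hd
  rw [skolemTriple, card_insert_of_notMem (by simp only [mem_insert, mem_singleton]; omega),
    card_insert_of_notMem (by simp only [mem_singleton]; omega), card_singleton]

theorem disjoint_skolemTriple (ha : IsSkolemPairing n t a) (k : ℕ) {d e : ℕ}
    (hd : d ∈ Icc 1 n) (he : e ∈ Icc 1 n) (hde : d ≠ e) :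
    Disjoint (skolemTriple n k a d) (skolemTriple n k a e) := by
  have := ha.one_le d hd
  have := ha.one_le e he
  have := ha.ne d hd e he hde
  have := ha.ne e he d hd hde.symm
  rw [mem_Icc] at hd he
  simp only [skolemTriple, disjoint_left, mem_insert, mem_singleton]
  omega

theorem skolemTriple_subset (ha : IsSkolemPairing n t a) (k : ℕ) {d : ℕ} (hd : d ∈ Icc 1 n) :
    skolemTriple n k a d ⊆ Icc 1 n ∪ Icc (n + 1 + k) (3 * n + k - 1) ∪ {3 * n + k + t} := by
  have := ha.one_le d hd
  have := ha.lt d hd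
  have := ha.add_lt_or_eq d hd
  rw [mem_Icc] at hd
  intro x
  simp only [skolemTriple, mem_insert, mem_singleton, mem_union, mem_Icc]
  omega

theorem sum_tripleSign_mul_skolemTriple (ha : IsSkolemPairing n t a) (k : ℕ) {d : ℕ}
    (hd : d ∈ Icc 1 n) :
    ∑ x ∈ skolemTriple n k a d, tripleSign n k a x * x = 0 := by
  have hpos := ha.one_le d hd
  have hsmall : tripleSign n k a d = 1 := by
    rw [tripleSign, if_neg]
    simp only [mem_image, not_exists, not_and]
    intro e he
    have := ha.one_le e he
    rw [mem_Icc] at hd he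
    omega
  have hmiddle : tripleSign n k a (a d + n + k) = 1 := by
    rw [tripleSign, if_neg]
    simp only [mem_image, not_exists, not_and]
    intro e he
    obtain rfl | hde := eq_or_ne d e
    · rw [mem_Icc] at hd
      omega
    · have := (ha.ne d hd e he hde).2.1
      omega
  have htop : tripleSign n k a (a d + d + n + k) = -1 :=
    if_pos (mem_image_of_mem _ hd)
  rw [mem_Icc] at hd
  rw [skolemTriple, sum_insert (by simp only [mem_insert, mem_singleton]; omega),
    sum_insert (by simp only [mem_singleton]; omega), sum_singleton, hsmall, hmiddle, htop]
  push_cast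
  ring

theorem biUnion_skolemTriple (ha : IsSkolemPairing n t a) (k : ℕ) (hn : 1 ≤ n) :
    univ.biUnion (fun i : Fin n => skolemTriple n k a (i + 1)) =
      Icc 1 n ∪ Icc (n + 1 + k) (3 * n + k - 1) ∪ {3 * n + k + t} := by
  refine eq_of_subset_of_card_le ?_ (le_of_eq ?_)
  · exact biUnion_subset.2 fun i _ => ha.skolemTriple_subset k (by simp)
  · rw [card_biUnion fun i _ j _ hij => ha.disjoint_skolemTriple k (by simp) (by simp)
      (by simpa [Fin.val_inj] using hij)]
    rw [sum_congr rfl fun i _ => ha.card_skolemTriple k (by simp), sum_const, card_univ,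
      Fintype.card_fin, smul_eq_mul, card_union_of_disjoint, card_union_of_disjoint,
      Nat.card_Icc, Nat.card_Icc, card_singleton]
    · omega
    · rw [disjoint_left]
      simp only [mem_Icc]
      omega
    · rw [disjoint_left]
      simp only [mem_union, mem_Icc, mem_singleton]
      omega

end IsSkolemPairing

def blockSign (m j : ℕ) : ℤ := if (j - m) % 4 = 0 ∨ (j - m) % 4 = 1 then 1 else -1

theorem blockSign_eq_one_or_eq_neg_one (m j : ℕ) : blockSign m j = 1 ∨ blockSign m j = -1 := by
  unfold blockSign
  split_ifs <;> simp

theorem sum_Ioc_blockSign_mul (m M : ℕ) : ∑ j ∈ Ioc m (m + 4 * M), blockSign m j * j = 0 := by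
  induction M with
  | zero => simp
  | succ M ih =>
    rw [show m + 4 * (M + 1) = m + 4 * M + 1 + 1 + 1 + 1 by ring, sum_Ioc_succ_top (by omega),
      sum_Ioc_succ_top (by omega), sum_Ioc_succ_top (by omega), sum_Ioc_succ_top (by omega), ih]
    simp only [blockSign]
    split_ifs <;> push_cast <;> omega

theorem exists_signs_sum_Icc_eq_zero_of_head {n h : ℕ} (c : ℕ → ℕ) (σ : ℕ → ℤ)
    (hσ : ∀ j, σ j = 1 ∨ σ j = -1) (hh : h ≤ n) (hmod : h % 4 = n % 4) (hc : ∀ j, h < j → c j = j)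
    (hsum : ∑ j ∈ Icc 1 h, σ j * c j = 0) :
    ∃ τ : ℕ → ℤ, (∀ j, τ j = 1 ∨ τ j = -1) ∧ ∑ j ∈ Icc 1 n, τ j * c j = 0 := by
  refine ⟨fun j => if j ≤ h then σ j else blockSign h j, fun j => ?_, ?_⟩
  · dsimp only
    split_ifs
    exacts [hσ j, blockSign_eq_one_or_eq_neg_one h j]
  · obtain ⟨M, rfl⟩ : ∃ M, n = h + 4 * M := ⟨(n - h) / 4, by omega⟩
    have hIcc : ∀ m, Icc 1 m = Ioc 0 m := Icc_add_one_left_eq_Ioc 0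
    dsimp only
    rw [hIcc, ← sum_Ioc_consecutive _ (Nat.zero_le h) (Nat.le_add_right h (4 * M)), ← hIcc,
      sum_congr rfl fun j hj => by rw [if_pos (mem_Icc.1 hj).2], hsum, zero_add,
      ← sum_Ioc_blockSign_mul h M]
    refine sum_congr rfl fun j hj => ?_
    rw [mem_Ioc] at hj
    rw [if_neg (by omega), hc j hj.1]

def distinguished (n k : ℕ) (a : ℕ → ℕ) (d : ℕ) : ℕ :=
  if (n % 4 = 1 ∨ n % 4 = 2) ∧ (d = 2 ∨ d = 4) then a d + n + k else d

theorem distinguished_mem_skolemTriple (n k : ℕ) (a : ℕ → ℕ) (d : ℕ) :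
    distinguished n k a d ∈ skolemTriple n k a d := by
  unfold distinguished skolemTriple
  split_ifs <;> simp

theorem exists_signs_sum_distinguished_eq_zero (k : ℕ) {n : ℕ} {a : ℕ → ℕ} (hn : 3 ≤ n)
    (ha : n % 4 = 1 ∨ n % 4 = 2 → a 2 = a 4 + 1 ∨ a 4 = a 2 + 1) :
    ∃ σ : ℕ → ℤ, (∀ j, σ j = 1 ∨ σ j = -1) ∧ ∑ j ∈ Icc 1 n, σ j * distinguished n k a j = 0 := by
  obtain h0 | h3 | h12 : n % 4 = 0 ∨ n % 4 = 3 ∨ (n % 4 = 1 ∨ n % 4 = 2) := by omega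
  · exact exists_signs_sum_Icc_eq_zero_of_head _ (fun _ => 1) (fun _ => Or.inl rfl) (Nat.zero_le n)
      (by omega) (fun j _ => if_neg (by omega)) (by simp)
  · refine exists_signs_sum_Icc_eq_zero_of_head _ (fun j => if j = 3 then -1 else 1)
      (fun j => by split_ifs <;> simp) hn (by omega) (fun j _ => if_neg (by omega)) ?_
    rw [← sum_range_add_one_eq_sum_Icc]
    simp [sum_range_succ, distinguished, h3]
  have htail : ∀ j, 4 < j → distinguished n k a j = j := fun j hj => if_neg (by omega)
  have h24 := ha h12
  have hsq : ((a 2 : ℤ) - a 4) ^ 2 = 1 := by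
    rcases h24 with h | h <;> rw [h] <;> push_cast <;> ring
  rcases h12 with h1 | h2
  · refine exists_signs_sum_Icc_eq_zero_of_head _
      (fun j => if j = 2 then a 2 - a 4 else if j = 4 then a 4 - a 2 else if j = 5 then -1 else 1)
      (fun j => by split_ifs <;> omega) (by omega : 5 ≤ n) (by omega)
      (fun j hj => htail j (by omega)) ?_
    rw [← sum_range_add_one_eq_sum_Icc]
    norm_num [sum_range_succ, distinguished, h1]
    linear_combination hsq
  · refine exists_signs_sum_Icc_eq_zero_of_head _
      (fun j => if j = 2 then a 2 - a 4 else if j = 4 then a 4 - a 2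
        else if j = 1 ∨ j = 6 then 1 else -1)
      (fun j => by split_ifs <;> omega) (by omega : 6 ≤ n) (by omega)
      (fun j hj => htail j (by omega)) ?_
    rw [← sum_range_add_one_eq_sum_Icc]
    norm_num [sum_range_succ, distinguished, h2]
    linear_combination hsq

theorem stmt_8 (k n t : ℕ) (hn : 3 ≤ n) (ht : t = 0 ∨ t = 1)
    (hmod : 3 * n % 4 = t % 4 ∨ 3 * n % 4 = (3 - t) % 4) :
    ∃ (r : ℕ) (D : Fin n → Finset ℕ) (ε : ℕ → ℤ) (d : Fin n → ℕ) (δ : Fin n → ℤ),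
      0 < r ∧
      (∀ i, (D i).card = 3) ∧
      (∀ i j, i ≠ j → Disjoint (D i) (D j)) ∧
      Finset.univ.biUnion D =
        Finset.Icc 1 r ∪ Finset.Icc (r + 1 + k) (3 * n + k - 1) ∪ {3 * n + k + t} ∧
      (∀ x, ε x = 1 ∨ ε x = -1) ∧
      (∀ i, ∑ x ∈ D i, ε x * (x : ℤ) = 0) ∧
      (∀ i, d i ∈ D i) ∧
      (∀ i, δ i = 1 ∨ δ i = -1) ∧
      ∑ i, δ i * ε (d i) * (d i : ℤ) = 0 := by
  obtain ⟨a, ha, ha24⟩ := exists_isSkolemPairing (t := t) hn (by omega)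
  obtain ⟨σ, hσ, hsum⟩ := exists_signs_sum_distinguished_eq_zero k hn ha24
  have hi : ∀ i : Fin n, (i : ℕ) + 1 ∈ Icc 1 n := fun i => mem_Icc.2 ⟨by omega, i.isLt⟩
  have hε : ∀ x, IsUnit (tripleSign n k a x) := fun x =>
    Int.isUnit_iff.2 (tripleSign_eq_one_or_eq_neg_one n k a x)
  refine ⟨n, fun i => skolemTriple n k a (i + 1), tripleSign n k a,
    fun i => distinguished n k a (i + 1),
    fun i => σ (i + 1) * tripleSign n k a (distinguished n k a (i + 1)), by omega,
    fun i => ha.card_skolemTriple k (hi i),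
    fun i j hij => ha.disjoint_skolemTriple k (hi i) (hi j) (by simpa [Fin.val_inj] using hij),
    ha.biUnion_skolemTriple k (by omega), tripleSign_eq_one_or_eq_neg_one n k a,
    fun i => ha.sum_tripleSign_mul_skolemTriple k (hi i),
    fun i => distinguished_mem_skolemTriple n k a _,
    fun i => Int.isUnit_iff.1 ((Int.isUnit_iff.2 (hσ _)).mul (hε _)), ?_⟩
  calc ∑ i : Fin n, σ (i + 1) * tripleSign n k a (distinguished n k a (i + 1)) *
        tripleSign n k a (distinguished n k a (i + 1)) * (distinguished n k a (i + 1) : ℤ)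
      = ∑ i : Fin n, σ (i + 1) * distinguished n k a (i + 1) := by
        refine sum_congr rfl fun i _ => ?_
        rw [mul_assoc (σ _), Int.isUnit_mul_self (hε _), mul_one]
    _ = ∑ j ∈ Icc 1 n, σ j * distinguished n k a j :=
        (Fin.sum_univ_eq_sum_range (fun i => σ (i + 1) * distinguished n k a (i + 1)) n).trans
          (sum_range_add_one_eq_sum_Icc (fun j => σ j * distinguished n k a j) n)
    _ = 0 := hsum
end

section
/- Let G be a finite simple connected Eulerian graph (every vertex has even degree) with M edges, where M ≡ 1 or 2 (mod 4). Then G is not graceful: there is no injection f : V(G) → {0,1,…,M} such that the map sending each edge uv to |f(u) − f(v)| is a bijection from E(G) to {1,…,M}. -/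
/-!
Modulo 2 the edge label `|f u - f v|` equals `f u + f v`, so summing the labels over all edges
counts each `f v` exactly `deg v` times; when all degrees are even the label sum is even. A
graceful labeling makes this sum `1 + 2 + ⋯ + M = M (M + 1) / 2`, which is odd when
`M ≡ 1, 2 (mod 4)`.
-/

open Finset

lemma Finset.sum_eq_sum_id_of_image_eq {α β : Type*} [DecidableEq β] [AddCommMonoid β]
    {s : Finset α} {t : Finset β} (g : α → β) (himg : s.image g = t) (hcard : #t = #s) :
    ∑ x ∈ s, g x = ∑ y ∈ t, y := by
  subst himg
  exact (sum_image (f := fun y => y) (injOn_of_card_image_eq hcard)).symm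

lemma Finset.sum_Icc_one_id_eq_sum_range (M : ℕ) :
    ∑ i ∈ Icc 1 M, i = ∑ i ∈ range (M + 1), i := by
  rw [range_eq_Ico, sum_eq_sum_Ico_succ_bot (by omega : 0 < M + 1), Ico_add_one_right_eq_Icc,
    zero_add]

lemma odd_sum_Icc_one_id {M : ℕ} (hM : M % 4 = 1 ∨ M % 4 = 2) : Odd (∑ i ∈ Icc 1 M, i) := by
  have hgauss := sum_range_id_mul_two (M + 1)
  rw [← sum_Icc_one_id_eq_sum_range, Nat.add_sub_cancel] at hgauss
  obtain ⟨k, rfl | rfl⟩ : ∃ k, M = 4 * k + 1 ∨ M = 4 * k + 2 := ⟨M / 4, by omega⟩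
  · exact ⟨4 * k ^ 2 + 3 * k, by nlinarith⟩
  · exact ⟨4 * k ^ 2 + 5 * k + 1, by nlinarith⟩

namespace SimpleGraph

variable {V : Type*} [Fintype V] (G : SimpleGraph V) [DecidableRel G.Adj]

lemma sum_dart_fst_eq_sum_degree_smul {β : Type*} [AddCommMonoid β] [DecidableEq V]
    (φ : V → β) :
    ∑ d : G.Dart, φ d.fst = ∑ v, G.degree v • φ v := by
  rw [← sum_fiberwise univ (fun d : G.Dart => d.fst)]
  refine sum_congr rfl fun v _ => ?_
  rw [sum_congr rfl fun d hd => congrArg φ (mem_filter.mp hd).2, sum_const,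
    dart_fst_fiber_card_eq_degree]

lemma sum_dart_fst_eq_sum_edgeFinset {β : Type*} [AddCommMonoid β] (φ : V → β) :
    ∑ d : G.Dart, φ d.fst =
      ∑ e ∈ G.edgeFinset, Sym2.lift ⟨fun u v => φ u + φ v, fun _ _ => add_comm _ _⟩ e := by
  classical
  rw [← sum_fiberwise_of_maps_to (g := Dart.edge) (t := G.edgeFinset)
    fun d _ => mem_edgeFinset.mpr d.edge_mem]
  refine sum_congr rfl fun e he => ?_
  induction e using Sym2.ind with
  | h u v =>
    let d : G.Dart := ⟨(u, v), mem_edgeFinset.mp he⟩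
    rw [show ({d' : G.Dart | d'.edge = s(u, v)} : Finset _) = {d, d.symm} from d.edge_fiber,
      sum_pair d.symm_ne.symm]
    rfl

def inducedEdgeLabel (f : V → ℕ) : Sym2 V → ℕ :=
  Sym2.lift ⟨fun u v => ((f u : ℤ) - (f v : ℤ)).natAbs, fun u v => by dsimp only; omega⟩

variable {G}

lemma even_sum_inducedEdgeLabel [DecidableEq V] (heul : ∀ v, Even (G.degree v)) (f : V → ℕ) :
    Even (∑ e ∈ G.edgeFinset, inducedEdgeLabel f e) := by
  rw [← ZMod.natCast_eq_zero_iff_even, Nat.cast_sum]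
  have hmod_two : ∀ e, (inducedEdgeLabel f e : ZMod 2) =
      Sym2.lift ⟨fun u v => (f u : ZMod 2) + f v, fun _ _ => add_comm _ _⟩ e := by
    refine Sym2.ind fun u v => ?_
    simp [inducedEdgeLabel, sub_eq_add_neg, ZMod.neg_eq_self_mod_two]
  rw [sum_congr rfl fun e _ => hmod_two e, ← sum_dart_fst_eq_sum_edgeFinset,
    sum_dart_fst_eq_sum_degree_smul G fun v => (f v : ZMod 2)]
  refine sum_eq_zero fun v _ => ?_
  rw [nsmul_eq_mul, (ZMod.natCast_eq_zero_iff_even).mpr (heul v), zero_mul]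

end SimpleGraph

theorem stmt_14 {V : Type*} [Fintype V] [DecidableEq V]
    (G : SimpleGraph V) [DecidableRel G.Adj]
    (heul : ∀ v, Even (G.degree v))
    (M : ℕ) (hM : M = G.edgeFinset.card) (hmod : M % 4 = 1 ∨ M % 4 = 2) :
    ¬ ∃ f : V → ℕ, Function.Injective f ∧ (∀ v, f v ≤ M) ∧
      G.edgeFinset.image
        (Sym2.lift ⟨fun u v => ((f u : ℤ) - (f v : ℤ)).natAbs,
          fun u v => by dsimp only; omega⟩) = Finset.Icc 1 M := by
  rintro ⟨f, -, -, hgraceful⟩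
  have hsum : ∑ e ∈ G.edgeFinset, SimpleGraph.inducedEdgeLabel f e = ∑ i ∈ Icc 1 M, i :=
    sum_eq_sum_id_of_image_eq _ hgraceful (by rw [Nat.card_Icc, hM, Nat.add_sub_cancel])
  exact Nat.not_even_iff_odd.mpr (odd_sum_Icc_one_id hmod)
    (hsum ▸ SimpleGraph.even_sum_inducedEdgeLabel heul f)
end
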